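/- arXiv:2401.17614 — 5 statements merged into one kernel-verified Lean document; each statement's English description precedes it below -/
import Mathlib

section
/- Let N ≥ 2 be a natural number, r ∈ (0,1), and let w_j = r·e^{2πi j/N} for j = 0,…,N−1 be N equally spaced points on the circle of radius r. Then the product over j = 1,…,N−1 of ρ(w_0, w_j), where ρ is the pseudohyperbolic metric, equals N·r^{N−1}·(1 − r²)/(1 − r^{2N}). -/
open Metric Real

/-- The pseudohyperbolic metric on the unit disk. -/
noncomputable def pRho (z w : ℂ) : ℝ :=
  ‖(z - w) / (1 - (starRingEnd ℂ) w * z)‖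

/-!
With `ζ = e^{2πi/N}` we have `w_j = r ζ^j` and `ρ(w_0, w_j) = |r (1 - ζ^j)| / |1 - r² ζ^j|`.
Dividing `X^N - y^N = ∏_{j<N} (X - y ζ^j)` by `X - y` gives
`∏_{0<j<N} (x - y ζ^j) = ∑_{i<N} y^i x^{N-1-i}`, so the numerators multiply to `r^{N-1} N` and
the denominators to `∑_{i<N} r^{2i} = (1 - r^{2N}) / (1 - r²)`.
-/

open Finset

open Polynomial in
lemma IsPrimitiveRoot.prod_sub_mul_pow_eq_geom_sum₂ {R : Type*} [CommRing R] [IsDomain R]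
    {n : ℕ} {μ : R} (hμ : IsPrimitiveRoot μ (n + 1)) (x y : R) :
    ∏ k ∈ range n, (x - y * μ ^ (k + 1)) = ∑ i ∈ range (n + 1), y ^ i * x ^ (n - i) := by
  have hprod := X_pow_sub_C_eq_prod hμ n.zero_lt_succ (rfl : y ^ (n + 1) = y ^ (n + 1))
  rw [C_pow, ← geom_sum₂_mul, geom_sum₂_comm, prod_range_succ', pow_zero, one_mul] at hprod
  have hpoly := mul_right_cancel₀ (X_sub_C_ne_zero y) hprod
  apply_fun eval x at hpoly
  simpa [eval_prod, eval_finsetSum, mul_comm] using hpoly.symm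

lemma pRho_ofReal_ofReal_mul (r : ℝ) (u : ℂ) :
    pRho r (r * u) = ‖r * (1 - u) / (1 - r ^ 2 * u)‖ := by
  rw [pRho, norm_div, norm_div, ← Complex.norm_conj (1 - _ * u)]
  congr 2
  · ring
  · simp only [map_sub, map_one, map_mul, map_pow, Complex.conj_ofReal]
    ring

/-- For `N ≥ 2` equally spaced points `w_j = r·e^{2πij/N}` on the circle of radius
`r ∈ (0,1)`, the product over `j = 1,…,N−1` of `ρ(w_0, w_j)` equals
`N·r^{N−1}·(1−r²)/(1−r^{2N})`. -/
theorem pRho_product_equally_spaced (N : ℕ) (hN : 2 ≤ N) (r : ℝ) (hr : r ∈ Set.Ioo (0:ℝ) 1)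
    (w : ℕ → ℂ)
    (hw : ∀ j, w j = (r : ℂ) * Complex.exp (2 * Real.pi * Complex.I * j / N)) :
    ∏ j ∈ Finset.Ico 1 N, pRho (w 0) (w j)
      = N * r ^ (N - 1) * (1 - r ^ 2) / (1 - r ^ (2 * N)) := by
  obtain ⟨hr0, hr1⟩ := hr
  obtain ⟨n, rfl⟩ : ∃ n, N = n + 1 := ⟨N - 1, by omega⟩
  set ζ := Complex.exp (2 * π * Complex.I / (n + 1 : ℕ))
  have hζ : IsPrimitiveRoot ζ (n + 1) := Complex.isPrimitiveRoot_exp _ n.succ_ne_zero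
  have hwζ (j : ℕ) : w j = r * ζ ^ j := by
    rw [hw, ← Complex.exp_nat_mul]
    ring_nf
  have hr2 : r ^ 2 ≠ 1 := by nlinarith
  have hr2N : (r ^ 2) ^ (n + 1) ≠ 1 :=
    (pow_lt_one₀ (by positivity) (by nlinarith) n.succ_ne_zero).ne
  calc ∏ j ∈ Ico 1 (n + 1), pRho (w 0) (w j)
      = ‖∏ k ∈ range n, (r * (1 - ζ ^ (k + 1))) / (1 - (r : ℂ) ^ 2 * ζ ^ (k + 1))‖ := by
        rw [prod_Ico_eq_prod_range, norm_prod]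
        simp [hwζ, pRho_ofReal_ofReal_mul, add_comm 1]
    _ = ‖((r ^ n * (n + 1) / ∑ i ∈ range (n + 1), (r ^ 2) ^ i : ℝ) : ℂ)‖ := by
        rw [prod_div_distrib, prod_mul_distrib, prod_const, card_range,
          hζ.prod_one_sub_pow_eq_order, hζ.prod_sub_mul_pow_eq_geom_sum₂]
        push_cast
        simp
    _ = (n + 1 : ℕ) * r ^ (n + 1 - 1) * (1 - r ^ 2) / (1 - r ^ (2 * (n + 1))) := by
        rw [Complex.norm_real, Real.norm_of_nonneg (by positivity), geom_sum_eq hr2, pow_mul]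
        push_cast
        field_simp
        ring
end

section
/- Let z ∈ 𝔻, R, t ∈ (0,1), and let w ∈ 𝔻 satisfy ρ(z,w) ≤ tR. Then for every y ∈ 𝔻 with ρ(y,z) ≥ R one has ρ(y,z)^a ≤ ρ(y,w) ≤ ρ(y,z)^b, where a = ln((1−tR²)/((1−t)R)) / ln(1/R) and b = ln((1+tR²)/((1+t)R)) / ln(1/R). -/
/-!
Write `r = ρ(y,z)`, `s = ρ(z,w)` and `φ_c(r) = (r + c) / (1 + c r)`. Since `ρ` is invariant under
the involution `u ↦ (z - u) / (1 - z̄ u)` of the disk, which sends `z` to `0`, the strong triangle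
inequality reduces to the identity `|1 - b̄ a|² - |a - b|² = (1 - |a|²)(1 - |b|²)` and gives
`φ_{-s}(r) ≤ ρ(y,w) ≤ φ_s(r)`; as `φ_c(r)` increases with `c`, we may replace `s` by `tR`.
Finally `x ↦ log φ_c(eˣ)` has derivative `(1 - c²) / (1 + c² + 2c cosh x)`, so it is convex on
`x ≤ 0` when `c ≥ 0` and concave where defined when `c < 0`. Comparing it with its chord through
`log R` and `0` gives `φ_{tR}(r) ≤ r^b` and `r^a ≤ φ_{-tR}(r)` for `R ≤ r < 1`, since the
exponents are `a, b = log φ_{∓tR}(R) / log R`.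
-/

open Metric Real

open Set ComplexConjugate

noncomputable def moebiusShift (c s : ℝ) : ℝ := (s + c) / (1 + c * s)

lemma moebiusShift_one {c : ℝ} (hc : 1 + c ≠ 0) : moebiusShift c 1 = 1 := by
  rw [moebiusShift, mul_one, div_self hc]

lemma one_sub_moebiusShift_sq {c s : ℝ} (h : 1 + c * s ≠ 0) :
    1 - moebiusShift c s ^ 2 = (1 - s ^ 2) * (1 - c ^ 2) / (1 + c * s) ^ 2 := by
  rw [moebiusShift, div_pow, eq_div_iff (pow_ne_zero 2 h), sub_mul,
    div_mul_cancel₀ _ (pow_ne_zero 2 h)]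
  ring

lemma moebiusShift_le_moebiusShift {c c' s : ℝ} (hcc' : c ≤ c') (hs : |s| ≤ 1)
    (hc : 0 < 1 + c * s) (hc' : 0 < 1 + c' * s) : moebiusShift c s ≤ moebiusShift c' s := by
  have hs₂ : s ^ 2 ≤ 1 := (sq_le_one_iff_abs_le_one s).2 hs
  rw [moebiusShift, moebiusShift, div_le_div_iff₀ hc hc']
  nlinarith [mul_nonneg (sub_nonneg.2 hcc') (sub_nonneg.2 hs₂)]

lemma norm_one_sub_conj_mul_sq_sub_norm_sub_sq (a b : ℂ) :
    ‖1 - conj b * a‖ ^ 2 - ‖a - b‖ ^ 2 = (1 - ‖a‖ ^ 2) * (1 - ‖b‖ ^ 2) := by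
  simp only [Complex.sq_norm, Complex.normSq_apply, Complex.sub_re, Complex.sub_im,
    Complex.mul_re, Complex.mul_im, Complex.conj_re, Complex.conj_im, Complex.one_re,
    Complex.one_im]
  ring

lemma norm_sub_lt_norm_one_sub_conj_mul {a b : ℂ} (ha : ‖a‖ < 1) (hb : ‖b‖ < 1) :
    ‖a - b‖ < ‖1 - conj b * a‖ := by
  have hid := norm_one_sub_conj_mul_sq_sub_norm_sub_sq a b
  have hpos : 0 < (1 - ‖a‖ ^ 2) * (1 - ‖b‖ ^ 2) := by
    apply mul_pos <;> nlinarith [norm_nonneg a, norm_nonneg b]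
  exact lt_of_pow_lt_pow_left₀ 2 (norm_nonneg _) (by linarith)

lemma one_sub_conj_mul_ne_zero {a b : ℂ} (ha : ‖a‖ < 1) (hb : ‖b‖ < 1) :
    1 - conj b * a ≠ 0 :=
  norm_pos_iff.1 ((norm_nonneg _).trans_lt (norm_sub_lt_norm_one_sub_conj_mul ha hb))

lemma pRho_nonneg (a b : ℂ) : 0 ≤ pRho a b := norm_nonneg _

lemma pRho_lt_one {a b : ℂ} (ha : ‖a‖ < 1) (hb : ‖b‖ < 1) : pRho a b < 1 := by
  rw [pRho, norm_div, div_lt_one (norm_pos_iff.2 (one_sub_conj_mul_ne_zero ha hb))]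
  exact norm_sub_lt_norm_one_sub_conj_mul ha hb

lemma pRho_comm (a b : ℂ) : pRho a b = pRho b a := by
  rw [pRho, pRho, norm_div, norm_div, norm_sub_rev, ← Complex.norm_conj (1 - conj a * b)]
  simp [mul_comm]

lemma one_sub_pRho_sq {a b : ℂ} (h : 1 - conj b * a ≠ 0) :
    1 - pRho a b ^ 2 = (1 - ‖a‖ ^ 2) * (1 - ‖b‖ ^ 2) / ‖1 - conj b * a‖ ^ 2 := by
  rw [← norm_one_sub_conj_mul_sq_sub_norm_sub_sq, pRho, norm_div, div_pow, sub_div,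
    div_self (by positivity)]

lemma pRho_mem_Icc_moebiusShift_norm {a b : ℂ} (ha : ‖a‖ < 1) (hb : ‖b‖ < 1) :
    pRho a b ∈ Icc (moebiusShift (-‖b‖) ‖a‖) (moebiusShift ‖b‖ ‖a‖) := by
  have hM₀ : 0 < ‖1 - conj b * a‖ := norm_pos_iff.2 (one_sub_conj_mul_ne_zero ha hb)
  have hab : ‖conj b * a‖ = ‖b‖ * ‖a‖ := by rw [norm_mul, Complex.norm_conj]
  have hM_ge : 1 - ‖b‖ * ‖a‖ ≤ ‖1 - conj b * a‖ := by
    simpa [hab] using norm_sub_norm_le (1 : ℂ) (conj b * a)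
  have hM_le : ‖1 - conj b * a‖ ≤ 1 + ‖b‖ * ‖a‖ := by
    simpa [hab] using norm_sub_le (1 : ℂ) (conj b * a)
  have hP : 0 ≤ (1 - ‖a‖ ^ 2) * (1 - ‖b‖ ^ 2) := by
    apply mul_nonneg <;> nlinarith [norm_nonneg a, norm_nonneg b]
  have hba : ‖b‖ * ‖a‖ < 1 := by nlinarith [norm_nonneg a, norm_nonneg b]
  have hρ := one_sub_pRho_sq (norm_pos_iff.1 hM₀)
  have hlo := one_sub_moebiusShift_sq (c := -‖b‖) (s := ‖a‖) (by nlinarith)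
  have hhi := one_sub_moebiusShift_sq (c := ‖b‖) (s := ‖a‖) (by positivity)
  rw [neg_sq, neg_mul, ← sub_eq_add_neg] at hlo
  constructor
  · refine le_of_sq_le_sq ?_ (norm_nonneg _)
    have : (1 - ‖a‖ ^ 2) * (1 - ‖b‖ ^ 2) / ‖1 - conj b * a‖ ^ 2
        ≤ (1 - ‖a‖ ^ 2) * (1 - ‖b‖ ^ 2) / (1 - ‖b‖ * ‖a‖) ^ 2 :=
      div_le_div_of_nonneg_left hP (by nlinarith) (pow_le_pow_left₀ (by linarith) hM_ge 2)
    linarith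
  · refine le_of_sq_le_sq ?_ (by unfold moebiusShift; positivity)
    have : (1 - ‖a‖ ^ 2) * (1 - ‖b‖ ^ 2) / (1 + ‖b‖ * ‖a‖) ^ 2
        ≤ (1 - ‖a‖ ^ 2) * (1 - ‖b‖ ^ 2) / ‖1 - conj b * a‖ ^ 2 :=
      div_le_div_of_nonneg_left hP (by positivity) (pow_le_pow_left₀ hM₀.le hM_le 2)
    linarith

noncomputable def diskInvolution (z u : ℂ) : ℂ := (z - u) / (1 - conj z * u)

lemma norm_diskInvolution (z u : ℂ) : ‖diskInvolution z u‖ = pRho u z := by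
  rw [diskInvolution, pRho, norm_div, norm_div, norm_sub_rev]

lemma diskInvolution_sub_diskInvolution {z y w : ℂ} (hy : 1 - conj z * y ≠ 0)
    (hw : 1 - conj z * w ≠ 0) :
    diskInvolution z y - diskInvolution z w =
      (1 - conj z * z) * (w - y) / ((1 - conj z * y) * (1 - conj z * w)) := by
  rw [diskInvolution, diskInvolution, div_sub_div _ _ hy hw]
  ring

lemma one_sub_conj_diskInvolution_mul {z y w : ℂ} (hy : 1 - conj z * y ≠ 0)
    (hw : 1 - conj z * w ≠ 0) :
    1 - conj (diskInvolution z w) * diskInvolution z y =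
      (1 - conj z * z) * (1 - conj w * y) / (conj (1 - conj z * w) * (1 - conj z * y)) := by
  have hw' : conj (1 - conj z * w) ≠ 0 := (map_ne_zero _).2 hw
  rw [diskInvolution, diskInvolution, map_div₀, div_mul_div_comm,
    eq_div_iff (mul_ne_zero hw' hy), sub_mul, div_mul_cancel₀ _ (mul_ne_zero hw' hy)]
  simp only [map_sub, map_one, map_mul, Complex.conj_conj]
  ring

lemma pRho_diskInvolution {z y w : ℂ} (hz : ‖z‖ < 1) (hy : ‖y‖ < 1) (hw : ‖w‖ < 1) :
    pRho (diskInvolution z y) (diskInvolution z w) = pRho y w := by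
  have hzy := one_sub_conj_mul_ne_zero hy hz
  have hzw := one_sub_conj_mul_ne_zero hw hz
  rw [pRho, diskInvolution_sub_diskInvolution hzy hzw, one_sub_conj_diskInvolution_mul hzy hzw,
    pRho]
  simp only [norm_div, norm_mul, Complex.norm_conj, norm_sub_rev w y]
  have := norm_ne_zero_iff.2 hzy
  have := norm_ne_zero_iff.2 hzw
  have := norm_ne_zero_iff.2 (one_sub_conj_mul_ne_zero hz hz)
  have := norm_ne_zero_iff.2 (one_sub_conj_mul_ne_zero hy hw)
  field_simp

lemma pRho_mem_Icc_moebiusShift {y z w : ℂ} (hy : ‖y‖ < 1) (hz : ‖z‖ < 1) (hw : ‖w‖ < 1) :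
    pRho y w ∈ Icc (moebiusShift (-pRho z w) (pRho y z)) (moebiusShift (pRho z w) (pRho y z)) := by
  have hy' : ‖diskInvolution z y‖ < 1 := norm_diskInvolution z y ▸ pRho_lt_one hy hz
  have hw' : ‖diskInvolution z w‖ < 1 := norm_diskInvolution z w ▸ pRho_lt_one hw hz
  have h := pRho_mem_Icc_moebiusShift_norm hy' hw'
  rwa [pRho_diskInvolution hz hy hw, norm_diskInvolution, norm_diskInvolution,
    pRho_comm w z] at h

lemma exp_add_mul_one_add_mul_exp (c x : ℝ) :
    (exp x + c) * (1 + c * exp x) = exp x * (1 + c ^ 2 + 2 * c * cosh x) := by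
  rw [cosh_eq, exp_neg]
  field_simp
  ring

lemma hasDerivAt_log_moebiusShift_exp {c x : ℝ} (h₁ : 0 < exp x + c) (h₂ : 0 < 1 + c * exp x) :
    HasDerivAt (fun x ↦ log (moebiusShift c (exp x)))
      ((1 - c ^ 2) / (1 + c ^ 2 + 2 * c * cosh x)) x := by
  have hφ : HasDerivAt (fun x ↦ moebiusShift c (exp x))
      ((exp x * (1 + c * exp x) - (exp x + c) * (c * exp x)) / (1 + c * exp x) ^ 2) x :=
    ((hasDerivAt_exp x).add_const c).div ((hasDerivAt_exp x).const_mul c |>.const_add 1) h₂.ne'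
  convert hφ.log (div_pos h₁ h₂).ne' using 1
  have hD : 1 + c ^ 2 + 2 * c * cosh x = (exp x + c) * (1 + c * exp x) / exp x := by
    rw [exp_add_mul_one_add_mul_exp, mul_div_cancel_left₀ _ (exp_pos x).ne']
  rw [hD, moebiusShift]
  field_simp
  ring

lemma convexOn_log_moebiusShift_exp {c : ℝ} (hc₀ : 0 ≤ c) (hc₁ : c < 1) :
    ConvexOn ℝ (Iic 0) (fun x ↦ log (moebiusShift c (exp x))) := by
  have hderiv : ∀ x, HasDerivAt (fun x ↦ log (moebiusShift c (exp x)))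
      ((1 - c ^ 2) / (1 + c ^ 2 + 2 * c * cosh x)) x := fun x ↦
    hasDerivAt_log_moebiusShift_exp (by positivity) (by positivity)
  refine MonotoneOn.convexOn_of_deriv (convex_Iic 0)
    (fun x _ ↦ (hderiv x).continuousAt.continuousWithinAt)
    (fun x _ ↦ (hderiv x).differentiableAt.differentiableWithinAt) ?_
  rw [interior_Iic]
  intro x (hx : x < 0) y (hy : y < 0) hxy
  rw [(hderiv x).deriv, (hderiv y).deriv]
  have hcosh : cosh y ≤ cosh x := cosh_le_cosh.2 (by rw [abs_of_neg hx, abs_of_neg hy]; linarith)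
  have := cosh_pos y
  gcongr
  nlinarith

lemma concaveOn_log_moebiusShift_exp {c : ℝ} (hc₀ : -1 < c) (hc₁ : c < 0) :
    ConcaveOn ℝ (Ioc (log (-c)) 0) (fun x ↦ log (moebiusShift c (exp x))) := by
  have hpos : ∀ x ∈ Ioc (log (-c)) 0, 0 < exp x + c ∧ 0 < 1 + c * exp x := by
    intro x hx
    have h₁ := exp_lt_exp.2 hx.1
    rw [exp_log (neg_pos.2 hc₁)] at h₁
    have h₂ : exp x ≤ 1 := exp_le_one_iff.2 hx.2
    constructor <;> nlinarith
  have hderiv : ∀ x ∈ Ioc (log (-c)) 0, HasDerivAt (fun x ↦ log (moebiusShift c (exp x)))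
      ((1 - c ^ 2) / (1 + c ^ 2 + 2 * c * cosh x)) x := fun x hx ↦
    hasDerivAt_log_moebiusShift_exp (hpos x hx).1 (hpos x hx).2
  refine AntitoneOn.concaveOn_of_deriv (convex_Ioc _ 0)
    (fun x hx ↦ (hderiv x hx).continuousAt.continuousWithinAt)
    (fun x hx ↦ (hderiv x (interior_subset hx)).differentiableAt.differentiableWithinAt) ?_
  rw [interior_Ioc]
  intro x hx y hy hxy
  rw [(hderiv x (Ioo_subset_Ioc_self hx)).deriv, (hderiv y (Ioo_subset_Ioc_self hy)).deriv]
  have hcosh : cosh y ≤ cosh x :=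
    cosh_le_cosh.2 (by rw [abs_of_neg hx.2, abs_of_neg hy.2]; linarith)
  have hD : 0 < 1 + c ^ 2 + 2 * c * cosh x := by
    obtain ⟨h₁, h₂⟩ := hpos x (Ioo_subset_Ioc_self hx)
    refine pos_of_mul_pos_right ?_ (exp_pos x).le
    rw [← exp_add_mul_one_add_mul_exp]
    exact mul_pos h₁ h₂
  exact div_le_div_of_nonneg_left (by nlinarith) hD (by nlinarith)

lemma moebiusShift_le_rpow {c R r : ℝ} (hc₀ : 0 ≤ c) (hc₁ : c < 1) (hR : 0 < R) (hRr : R ≤ r)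
    (hr : r < 1) : moebiusShift c r ≤ r ^ (log (moebiusShift c R) / log R) := by
  have hr₀ : 0 < r := hR.trans_le hRr
  have hlogr : log r < 0 := log_neg hr₀ hr
  have hlogR : log R < 0 := log_neg hR (hRr.trans_lt hr)
  have hslope := (convexOn_log_moebiusShift_exp hc₀ hc₁).secant_mono (a := 0) self_mem_Iic
    hlogR.le hlogr.le hlogR.ne hlogr.ne (log_le_log hR hRr)
  simp only [exp_zero, moebiusShift_one (by linarith : 1 + c ≠ 0), log_one, exp_log hR,
    exp_log hr₀, sub_zero] at hslope
  exact rpow_le_of_le_log hr₀ ((le_div_iff_of_neg hlogr).1 hslope)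

lemma rpow_le_moebiusShift {c R r : ℝ} (hc₀ : -R < c) (hc₁ : c < 0) (hRr : R ≤ r)
    (hr : r < 1) : r ^ (log (moebiusShift c R) / log R) ≤ moebiusShift c r := by
  have hR : 0 < R := by linarith
  have hr₀ : 0 < r := hR.trans_le hRr
  have hlogr : log r < 0 := log_neg hr₀ hr
  have hlogR : log R < 0 := log_neg hR (hRr.trans_lt hr)
  have hlogc : log (-c) < log R := log_lt_log (by linarith) (by linarith)
  have hslope := (concaveOn_log_moebiusShift_exp (c := c) (by linarith) hc₁).neg.secant_mono
    (a := 0) (x := log R) (y := log r) ⟨hlogc.trans hlogR, le_rfl⟩ ⟨hlogc, hlogR.le⟩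
    ⟨hlogc.trans_le (log_le_log hR hRr), hlogr.le⟩ hlogR.ne hlogr.ne (log_le_log hR hRr)
  simp only [Pi.neg_apply, exp_zero, moebiusShift_one (by linarith : 1 + c ≠ 0), log_one,
    exp_log hR, exp_log hr₀, sub_zero, neg_zero, neg_div, neg_le_neg_iff] at hslope
  have hφ : 0 < moebiusShift c r := div_pos (by linarith) (by nlinarith)
  exact (rpow_le_iff_le_log hr₀ hφ).2 ((div_le_iff_of_neg hlogr).1 hslope)

lemma log_inv_div_log_inv (a b : ℝ) : log a⁻¹ / log b⁻¹ = log a / log b := by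
  rw [log_inv, log_inv, neg_div_neg_eq]

/-- If `ρ(z,w) ≤ tR` then for every `y` with `ρ(y,z) ≥ R` one has
`ρ(y,z)^a ≤ ρ(y,w) ≤ ρ(y,z)^b` with the explicit exponents
`a = ln((1−tR²)/((1−t)R))/ln(1/R)` and `b = ln((1+tR²)/((1+t)R))/ln(1/R)`. -/
theorem pRho_power_comparison (z w y : ℂ) (hz : z ∈ ball (0 : ℂ) 1)
    (hw : w ∈ ball (0 : ℂ) 1) (hy : y ∈ ball (0 : ℂ) 1)
    (R t : ℝ) (hR : R ∈ Set.Ioo (0:ℝ) 1) (ht : t ∈ Set.Ioo (0:ℝ) 1)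
    (hzw : pRho z w ≤ t * R) (hyz : R ≤ pRho y z) :
    pRho y z ^ (Real.log ((1 - t * R ^ 2) / ((1 - t) * R)) / Real.log (1 / R))
        ≤ pRho y w ∧
    pRho y w ≤
      pRho y z ^ (Real.log ((1 + t * R ^ 2) / ((1 + t) * R)) / Real.log (1 / R)) := by
  obtain ⟨hR₀, -⟩ := hR
  obtain ⟨ht₀, ht₁⟩ := ht
  rw [mem_ball_zero_iff] at hz hw hy
  have hr₁ : pRho y z < 1 := pRho_lt_one hy hz
  have hr₀ := pRho_nonneg y z
  have hs₀ := pRho_nonneg z w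
  have hr : |pRho y z| ≤ 1 := abs_le.2 ⟨by linarith, hr₁.le⟩
  have htR : t * R < R := mul_lt_of_lt_one_left hR₀ ht₁
  have htR₀ : 0 < t * R := mul_pos ht₀ hR₀
  have ha : (1 - t * R ^ 2) / ((1 - t) * R) = (moebiusShift (-(t * R)) R)⁻¹ := by
    rw [moebiusShift, inv_div]; congr 1 <;> ring
  have hb : (1 + t * R ^ 2) / ((1 + t) * R) = (moebiusShift (t * R) R)⁻¹ := by
    rw [moebiusShift, inv_div]; congr 1 <;> ring
  rw [ha, hb, one_div, log_inv_div_log_inv, log_inv_div_log_inv]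
  obtain ⟨hlow, hupp⟩ := pRho_mem_Icc_moebiusShift hy hz hw
  constructor
  · calc _ ≤ moebiusShift (-(t * R)) (pRho y z) :=
          rpow_le_moebiusShift (by linarith) (by linarith) hyz hr₁
      _ ≤ moebiusShift (-pRho z w) (pRho y z) :=
        moebiusShift_le_moebiusShift (by linarith) hr (by nlinarith) (by nlinarith)
      _ ≤ pRho y w := hlow
  · calc pRho y w ≤ moebiusShift (pRho z w) (pRho y z) := hupp
      _ ≤ moebiusShift (t * R) (pRho y z) :=
        moebiusShift_le_moebiusShift hzw hr (by nlinarith) (by nlinarith)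
      _ ≤ _ := moebiusShift_le_rpow htR₀.le (by linarith) hR₀ hyz hr₁
end

section
/- Let δ ∈ (0,1] and c ∈ (0,1) with c < δ ≤ 1. If a sequence ζ in 𝔻 has interpolation characteristic δ(ζ) ≥ c, λ ∈ (0,1) satisfies 2λ/(1+λ²) < c, and each point of a sequence ω = {w_n} satisfies ρ(w_n, z_n) ≤ λ where ζ = {z_n}, then the interpolation characteristic of ω satisfies δ(ω) ≥ (c − 2λ/(1+λ²))/(1 − 2cλ/(1+λ²)). -/
/-!
The pseudohyperbolic distance is invariant under the disk automorphisms `z ↦ (z - a)/(1 - ā z)`,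
and at the origin it satisfies `ρ(p, q) ≤ (|p| + |q|)/(1 + |p||q|)`; together these give the strong
triangle inequality `ρ(u, w) ≤ (ρ(u, v) + ρ(v, w))/(1 + ρ(u, v) ρ(v, w))`. With the real Möbius map
`ψ_t(x) = (x - t)/(1 - t x)` (i.e. `tanh (artanh x - artanh t)`) this reads `ψ_t(ρ(u, w)) ≤ ρ(u, v)`
whenever `ρ(v, w) ≤ t`. Moving both endpoints by at most `λ` therefore gives
`ρ(w_j, w_k) ≥ ψ_λ(ψ_λ(ρ(z_j, z_k))) = ψ_r(ρ(z_j, z_k))` with `r = 2λ/(1 + λ²)`. Since `ψ_r` is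
increasing and supermultiplicative on `[r, 1]`, every finite partial product satisfies
`ψ_r(c) ≤ ψ_r(∏ ρ(z_j, z_k)) ≤ ∏ ψ_r(ρ(z_j, z_k)) ≤ ∏ ρ(w_j, w_k)`.
-/

open Metric

/-- The interpolation characteristic `δ(ζ) = inf_k ∏_{j≠k} ρ(z_j, z_k)` of a sequence. -/
noncomputable def charSeq {ι : Type*} (z : ι → ℂ) : ℝ :=
  ⨅ k : ι, ∏' j : {j : ι // j ≠ k}, pRho (z j) (z k)

open ComplexConjugate

lemma normSq_one_sub_conj_mul_sub_normSq_sub (z w : ℂ) :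
    Complex.normSq (1 - conj w * z) - Complex.normSq (z - w)
      = (1 - Complex.normSq z) * (1 - Complex.normSq w) := by
  simp only [Complex.normSq_apply, Complex.sub_re, Complex.sub_im, Complex.mul_re, Complex.mul_im,
    Complex.one_re, Complex.one_im, Complex.conj_re, Complex.conj_im]
  ring

lemma norm_sub_lt_norm_one_sub_conj_mul_s5 {z w : ℂ} (hz : ‖z‖ < 1) (hw : ‖w‖ < 1) :
    ‖z - w‖ < ‖1 - conj w * z‖ := by
  have hz' : Complex.normSq z < 1 := by rw [← Complex.sq_norm]; nlinarith [norm_nonneg z]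
  have hw' : Complex.normSq w < 1 := by rw [← Complex.sq_norm]; nlinarith [norm_nonneg w]
  refine lt_of_pow_lt_pow_left₀ 2 (norm_nonneg _) ?_
  rw [Complex.sq_norm, Complex.sq_norm]
  nlinarith [normSq_one_sub_conj_mul_sub_normSq_sub z w, mul_pos (sub_pos.2 hz') (sub_pos.2 hw')]

lemma one_sub_conj_mul_ne_zero_s5 {z w : ℂ} (hz : ‖z‖ < 1) (hw : ‖w‖ < 1) :
    1 - conj w * z ≠ 0 :=
  norm_pos_iff.1 ((norm_nonneg _).trans_lt (norm_sub_lt_norm_one_sub_conj_mul_s5 hz hw))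

lemma pRho_nonneg_s5 (z w : ℂ) : 0 ≤ pRho z w := norm_nonneg _

lemma pRho_lt_one_s5 {z w : ℂ} (hz : ‖z‖ < 1) (hw : ‖w‖ < 1) : pRho z w < 1 := by
  have h := norm_sub_lt_norm_one_sub_conj_mul_s5 hz hw
  rwa [pRho, norm_div, div_lt_one ((norm_nonneg _).trans_lt h)]

lemma pRho_comm_s5 (z w : ℂ) : pRho z w = pRho w z := by
  rw [pRho, pRho, norm_div, norm_div, norm_sub_rev, ← Complex.norm_conj (1 - conj z * w)]
  simp [mul_comm]

noncomputable def mobius (a z : ℂ) : ℂ := (z - a) / (1 - conj a * z)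

lemma norm_mobius (a z : ℂ) : ‖mobius a z‖ = pRho z a := rfl

lemma norm_mobius_lt_one {a z : ℂ} (ha : ‖a‖ < 1) (hz : ‖z‖ < 1) : ‖mobius a z‖ < 1 :=
  pRho_lt_one_s5 hz ha

lemma pRho_mobius {a u v : ℂ} (ha : ‖a‖ < 1) (hu : ‖u‖ < 1) (hv : ‖v‖ < 1) :
    pRho (mobius a u) (mobius a v) = pRho u v := by
  have du := one_sub_conj_mul_ne_zero_s5 hu ha
  have dv := one_sub_conj_mul_ne_zero_s5 hv ha
  have dv' : 1 - a * conj v ≠ 0 := by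
    simpa using (map_ne_zero (starRingEnd ℂ)).2 dv
  have da := one_sub_conj_mul_ne_zero_s5 ha ha
  have duv := one_sub_conj_mul_ne_zero_s5 hu hv
  have hsub : mobius a u - mobius a v
      = (u - v) * (1 - conj a * a) / ((1 - conj a * u) * (1 - conj a * v)) := by
    rw [mobius, mobius, div_sub_div _ _ du dv]
    ring
  have hden : 1 - conj (mobius a v) * mobius a u
      = (1 - conj v * u) * (1 - conj a * a) / ((1 - a * conj v) * (1 - conj a * u)) := by
    simp only [mobius, map_div₀, map_sub, map_mul, Complex.conj_conj, map_one]
    rw [div_mul_div_comm, one_sub_div (mul_ne_zero dv' du)]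
    congr 1
    ring
  have key : (mobius a u - mobius a v) / (1 - conj (mobius a v) * mobius a u)
      = (u - v) / (1 - conj v * u) * ((1 - a * conj v) / (1 - conj a * v)) := by
    rw [hsub, hden, div_div_div_eq, div_mul_div_comm, div_eq_div_iff
      (mul_ne_zero (mul_ne_zero du dv) (mul_ne_zero duv da)) (mul_ne_zero duv dv)]
    ring
  have hunit : ‖(1 - a * conj v) / (1 - conj a * v)‖ = 1 := by
    rw [norm_div, div_eq_one_iff_eq (norm_ne_zero_iff.2 dv), ← Complex.norm_conj]
    simp [mul_comm]
  rw [pRho, key, norm_mul, hunit, mul_one, pRho]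

lemma pRho_mul_one_add_norm_mul_norm_le {p q : ℂ} (hp : ‖p‖ < 1) (hq : ‖q‖ < 1) :
    pRho p q * (1 + ‖p‖ * ‖q‖) ≤ ‖p‖ + ‖q‖ := by
  have hD := (norm_nonneg _).trans_lt (norm_sub_lt_norm_one_sub_conj_mul_s5 hp hq)
  rw [pRho, norm_div, div_mul_eq_mul_div, div_le_iff₀ hD]
  set t := (p * conj q).re
  have ht : -(‖p‖ * ‖q‖) ≤ t := by
    have := Complex.abs_re_le_norm (p * conj q)
    rw [norm_mul, Complex.norm_conj] at this
    linarith [neg_abs_le t]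
  have hnum : ‖p - q‖ ^ 2 = ‖p‖ ^ 2 + ‖q‖ ^ 2 - 2 * t := by
    simp only [Complex.sq_norm, Complex.normSq_apply, t, Complex.mul_re, Complex.sub_re,
      Complex.sub_im, Complex.conj_re, Complex.conj_im]
    ring
  have hden : ‖1 - conj q * p‖ ^ 2 = 1 + (‖p‖ * ‖q‖) ^ 2 - 2 * t := by
    simp only [mul_pow, Complex.sq_norm, Complex.normSq_apply, t, Complex.mul_re, Complex.mul_im,
      Complex.sub_re, Complex.sub_im, Complex.conj_re, Complex.conj_im, Complex.one_re,
      Complex.one_im]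
    ring
  have hp2 : ‖p‖ ^ 2 ≤ 1 := by nlinarith [norm_nonneg p]
  have hq2 : ‖q‖ ^ 2 ≤ 1 := by nlinarith [norm_nonneg q]
  rw [← pow_le_pow_iff_left₀ (by positivity) (by positivity) two_ne_zero, mul_pow, mul_pow, hnum,
    hden]
  nlinarith [mul_nonneg (mul_nonneg (neg_le_iff_add_nonneg.1 ht) (sub_nonneg.2 hp2))
    (sub_nonneg.2 hq2)]

lemma pRho_mul_one_add_le {u v w : ℂ} (hu : ‖u‖ < 1) (hv : ‖v‖ < 1) (hw : ‖w‖ < 1) :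
    pRho u w * (1 + pRho u v * pRho v w) ≤ pRho u v + pRho v w := by
  rw [← pRho_mobius hv hu hw, pRho_comm_s5 v w, ← norm_mobius, ← norm_mobius]
  exact pRho_mul_one_add_norm_mul_norm_le (norm_mobius_lt_one hv hu) (norm_mobius_lt_one hv hw)

noncomputable def mobiusSub (r x : ℝ) : ℝ := (x - r) / (1 - r * x)

section mobiusSub

variable {r x y : ℝ}

lemma mobiusSub_nonneg (hr0 : 0 ≤ r) (hrx : r ≤ x) (hx : x ≤ 1) : 0 ≤ mobiusSub r x :=
  div_nonneg (sub_nonneg.2 hrx) (by nlinarith)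

lemma mobiusSub_le_mobiusSub (hr0 : 0 ≤ r) (hr1 : r < 1) (hxy : x ≤ y) (hy : y ≤ 1) :
    mobiusSub r x ≤ mobiusSub r y := by
  rw [mobiusSub, mobiusSub, div_le_div_iff₀ (by nlinarith) (by nlinarith)]
  nlinarith [mul_nonneg (sub_nonneg.2 hxy) (by nlinarith : (0:ℝ) ≤ 1 - r ^ 2)]

lemma mobiusSub_mobiusSub (hr0 : 0 ≤ r) (hr1 : r < 1) (hx : x ≤ 1) :
    mobiusSub r (mobiusSub r x) = mobiusSub (2 * r / (1 + r ^ 2)) x := by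
  have h1 : 1 - r * x ≠ 0 := by nlinarith
  have h2 : 1 - r * x - r * (x - r) ≠ 0 := by nlinarith
  have h3 : 1 + r ^ 2 ≠ 0 := by positivity
  have h4 : 1 - 2 * r / (1 + r ^ 2) * x = (1 - r * x - r * (x - r)) / (1 + r ^ 2) := by
    field_simp
    ring
  rw [mobiusSub, mobiusSub, mobiusSub, div_sub' h1, mul_div_assoc', one_sub_div h1,
    div_div_div_cancel_right₀ h1, h4, div_eq_div_iff h2 (div_ne_zero h2 h3)]
  field_simp
  ring

lemma mobiusSub_mul_le (hr0 : 0 ≤ r) (hr1 : r < 1) (hx1 : x ≤ 1)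
    (hy0 : 0 ≤ y) (hy1 : y ≤ 1) : mobiusSub r (x * y) ≤ mobiusSub r x * mobiusSub r y := by
  have hxy1 : x * y ≤ 1 := mul_le_one₀ hx1 hy0 hy1
  rw [mobiusSub, mobiusSub, mobiusSub, div_mul_div_comm,
    div_le_div_iff₀ (by nlinarith) (mul_pos (by nlinarith) (by nlinarith))]
  nlinarith [mul_nonneg (mul_nonneg (mul_nonneg (mul_nonneg hr0 (by linarith : (0:ℝ) ≤ 1 + r))
    (sub_nonneg.2 hxy1)) (sub_nonneg.2 hx1)) (sub_nonneg.2 hy1)]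

lemma mobiusSub_prod_le {ι : Type*} (s : Finset ι) (f : ι → ℝ) (hr0 : 0 ≤ r) (hr1 : r < 1)
    (hf : ∀ i ∈ s, r ≤ f i ∧ f i ≤ 1) :
    mobiusSub r (∏ i ∈ s, f i) ≤ ∏ i ∈ s, mobiusSub r (f i) := by
  induction s using Finset.cons_induction with
  | empty => simp [mobiusSub, div_self (sub_ne_zero.2 hr1.ne')]
  | cons i s hi ih =>
    rw [Finset.prod_cons, Finset.prod_cons]
    obtain ⟨hri, hi1⟩ := hf i (s.mem_cons_self i)
    have hs : ∀ j ∈ s, r ≤ f j ∧ f j ≤ 1 := fun j hj ↦ hf j (Finset.mem_cons_of_mem hj)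
    calc mobiusSub r (f i * ∏ j ∈ s, f j)
        ≤ mobiusSub r (f i) * mobiusSub r (∏ j ∈ s, f j) :=
          mobiusSub_mul_le hr0 hr1 hi1
            (Finset.prod_nonneg fun j hj ↦ hr0.trans (hs j hj).1)
            (Finset.prod_le_one (fun j hj ↦ hr0.trans (hs j hj).1) fun j hj ↦ (hs j hj).2)
      _ ≤ mobiusSub r (f i) * ∏ j ∈ s, mobiusSub r (f j) :=
          mul_le_mul_of_nonneg_left (ih hs) (mobiusSub_nonneg hr0 hri hi1)

end mobiusSub

lemma mobiusSub_pRho_le_pRho {u v w : ℂ} (hu : ‖u‖ < 1) (hv : ‖v‖ < 1) (hw : ‖w‖ < 1) {t : ℝ}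
    (hvw : pRho v w ≤ t) (ht : t ≤ 1) : mobiusSub t (pRho u w) ≤ pRho u v := by
  have htri := pRho_mul_one_add_le hu hv hw
  have huw0 := pRho_nonneg_s5 u w
  have huw1 := pRho_lt_one_s5 hu hw
  have huv0 := pRho_nonneg_s5 u v
  have huv1 := pRho_lt_one_s5 hu hv
  rw [mobiusSub, div_le_iff₀ (by nlinarith)]
  nlinarith [mul_nonneg (sub_nonneg.2 hvw) (by nlinarith : 0 ≤ 1 - pRho u w * pRho u v)]

lemma mobiusSub_pRho_le_pRho_of_pRho_le {z z' w w' : ℂ} (hz : ‖z‖ < 1) (hz' : ‖z'‖ < 1)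
    (hw : ‖w‖ < 1) (hw' : ‖w'‖ < 1) {l : ℝ} (hl0 : 0 ≤ l) (hl1 : l < 1)
    (hwz : pRho w z ≤ l) (hwz' : pRho w' z' ≤ l) :
    mobiusSub (2 * l / (1 + l ^ 2)) (pRho z z') ≤ pRho w w' := by
  have hstep1 : mobiusSub l (pRho z z') ≤ pRho w z' := by
    rw [pRho_comm_s5 z, pRho_comm_s5 w]
    exact mobiusSub_pRho_le_pRho hz' hw hz hwz hl1.le
  have hstep2 : mobiusSub l (pRho w z') ≤ pRho w w' :=
    mobiusSub_pRho_le_pRho hw hw' hz' hwz' hl1.le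
  calc mobiusSub (2 * l / (1 + l ^ 2)) (pRho z z')
      = mobiusSub l (mobiusSub l (pRho z z')) :=
        (mobiusSub_mobiusSub hl0 hl1 (pRho_lt_one_s5 hz hz').le).symm
    _ ≤ mobiusSub l (pRho w z') :=
        mobiusSub_le_mobiusSub hl0 hl1 hstep1 (pRho_lt_one_s5 hw hz').le
    _ ≤ pRho w w' := hstep2

lemma hasProd_iInf_prod_of_nonneg_of_le_one {ι : Type*} {f : ι → ℝ} (hf0 : ∀ i, 0 ≤ f i)
    (hf1 : ∀ i, f i ≤ 1) :
    HasProd f (⨅ s : Finset ι, ∏ i ∈ s, f i) := by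
  classical
  refine tendsto_atTop_ciInf (fun s t hst ↦ ?_) ⟨0, ?_⟩
  · rw [← Finset.prod_sdiff hst]
    exact mul_le_of_le_one_left (Finset.prod_nonneg fun i _ ↦ hf0 i)
      (Finset.prod_le_one (fun i _ ↦ hf0 i) fun i _ ↦ hf1 i)
  · rintro _ ⟨s, rfl⟩
    exact Finset.prod_nonneg fun i _ ↦ hf0 i

lemma le_tprod_iff_of_nonneg_of_le_one {ι : Type*} {f : ι → ℝ} (hf0 : ∀ i, 0 ≤ f i)
    (hf1 : ∀ i, f i ≤ 1) {c : ℝ} :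
    c ≤ ∏' i, f i ↔ ∀ s : Finset ι, c ≤ ∏ i ∈ s, f i := by
  rw [(hasProd_iInf_prod_of_nonneg_of_le_one hf0 hf1).tprod_eq]
  exact le_ciInf_iff ⟨0, by rintro _ ⟨s, rfl⟩; exact Finset.prod_nonneg fun i _ ↦ hf0 i⟩

lemma mobiusSub_le_tprod {ι : Type*} {f g : ι → ℝ} (hf0 : ∀ i, 0 ≤ f i) (hf1 : ∀ i, f i ≤ 1)
    (hg0 : ∀ i, 0 ≤ g i) (hg1 : ∀ i, g i ≤ 1) {r c : ℝ} (hr : 0 ≤ r) (hrc : r < c)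
    (hc : c ≤ ∏' i, f i) (hfg : ∀ i, mobiusSub r (f i) ≤ g i) :
    mobiusSub r c ≤ ∏' i, g i := by
  classical
  rw [le_tprod_iff_of_nonneg_of_le_one hf0 hf1] at hc
  rw [le_tprod_iff_of_nonneg_of_le_one hg0 hg1]
  have hr1 : r < 1 := hrc.trans_le (by simpa using hc ∅)
  have hcf : ∀ i, c ≤ f i := fun i ↦ by simpa using hc {i}
  intro s
  calc mobiusSub r c ≤ mobiusSub r (∏ i ∈ s, f i) :=
        mobiusSub_le_mobiusSub hr hr1 (hc s) (Finset.prod_le_one (fun i _ ↦ hf0 i) fun i _ ↦ hf1 i)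
    _ ≤ ∏ i ∈ s, mobiusSub r (f i) :=
        mobiusSub_prod_le s f hr hr1 fun i _ ↦ ⟨hrc.le.trans (hcf i), hf1 i⟩
    _ ≤ ∏ i ∈ s, g i :=
        Finset.prod_le_prod (fun i _ ↦ mobiusSub_nonneg hr (hrc.le.trans (hcf i)) (hf1 i))
          fun i _ ↦ hfg i

lemma le_charSeq_iff {ι : Type*} [Nonempty ι] (z : ι → ℂ) (c : ℝ) :
    c ≤ charSeq z ↔ ∀ k, c ≤ ∏' j : {j : ι // j ≠ k}, pRho (z j) (z k) :=
  le_ciInf_iff ⟨0, by rintro _ ⟨k, rfl⟩; exact tprod_nonneg fun j ↦ pRho_nonneg_s5 _ _⟩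

theorem charSeq_perturbation_general (ζ ω : ℕ → ℂ)
    (hζ : ∀ n, ζ n ∈ ball (0 : ℂ) 1) (hω : ∀ n, ω n ∈ ball (0 : ℂ) 1)
    (c : ℝ)
    (hchar : c ≤ charSeq ζ)
    (lam : ℝ) (hlam : lam ∈ Set.Ioo (0:ℝ) 1) (hlamc : 2 * lam / (1 + lam ^ 2) < c)
    (hperturb : ∀ n, pRho (ω n) (ζ n) ≤ lam) :
    (c - 2 * lam / (1 + lam ^ 2)) / (1 - 2 * c * lam / (1 + lam ^ 2)) ≤ charSeq ω := by
  simp only [mem_ball_zero_iff] at hζ hω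
  have hr : 0 ≤ 2 * lam / (1 + lam ^ 2) := by have := hlam.1; positivity
  have hgoal : (c - 2 * lam / (1 + lam ^ 2)) / (1 - 2 * c * lam / (1 + lam ^ 2))
      = mobiusSub (2 * lam / (1 + lam ^ 2)) c := by
    rw [mobiusSub]
    ring
  rw [hgoal, le_charSeq_iff]
  intro k
  refine mobiusSub_le_tprod ?_ ?_ ?_ ?_ hr hlamc ((le_charSeq_iff ζ c).1 hchar k) fun j ↦ ?_
  · exact fun j ↦ pRho_nonneg_s5 _ _
  · exact fun j ↦ (pRho_lt_one_s5 (hζ j) (hζ k)).le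
  · exact fun j ↦ pRho_nonneg_s5 _ _
  · exact fun j ↦ (pRho_lt_one_s5 (hω j) (hω k)).le
  · exact mobiusSub_pRho_le_pRho_of_pRho_le (hζ j) (hζ k) (hω j) (hω k) hlam.1.le hlam.2
      (hperturb j) (hperturb k)

/-- Stability of the interpolation characteristic under pseudohyperbolic perturbation:
if `δ(ζ) ≥ c`, `2λ/(1+λ²) < c` and `ρ(w_n,z_n) ≤ λ` for all `n`, then
`δ(ω) ≥ (c − 2λ/(1+λ²))/(1 − 2cλ/(1+λ²))`. -/
theorem charSeq_perturbation (ζ ω : ℕ → ℂ)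
    (hζ : ∀ n, ζ n ∈ ball (0 : ℂ) 1) (hω : ∀ n, ω n ∈ ball (0 : ℂ) 1)
    (δ c : ℝ) (hδ : δ ∈ Set.Ioc (0:ℝ) 1) (hc : c ∈ Set.Ioo (0:ℝ) 1) (hcδ : c < δ)
    (hchar : c ≤ charSeq ζ)
    (lam : ℝ) (hlam : lam ∈ Set.Ioo (0:ℝ) 1) (hlamc : 2 * lam / (1 + lam ^ 2) < c)
    (hperturb : ∀ n, pRho (ω n) (ζ n) ≤ lam) :
    (c - 2 * lam / (1 + lam ^ 2)) / (1 - 2 * c * lam / (1 + lam ^ 2)) ≤ charSeq ω :=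
  charSeq_perturbation_general ζ ω hζ hω c hchar lam hlam hlamc hperturb
end

section
/- Define a(r) = [ln((1−tR²)/((1−t)R))/ln(1/R)]·[ln((4−ε²)/(3ε))/ln(1/ε)] and similarly b(r) as products of the two exponents b₁ b₂ in the paper with R = 3ε/4, t = 1/3 and R = ε, t = 1/4, where r = ε/4. Then a(r) ∈ (1,2), b(r) ∈ (0,1), and a(r) − 1 = O(1/ln(1/r)) and 1 − b(r) = O(1/ln(1/r)) as r → 0⁺. -/
/-!
Writing `L = log (1/ε)`, each of the four factors has the shape `log (x/ε) / log (s/ε)` with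
`1 ≤ s` and `x/s` confined to a fixed compact subinterval of `(0, ∞)` for `ε < 1`. Since
`log (x/ε) = log (x/s) + log (s/ε)` and `log (s/ε) ≥ L`, such a factor is `1 + O(1/L)`, with the
sign of the error fixed by the sign of `log (x/s)`. Multiplying two such factors keeps the
`O(1/L)` error, and `log (1/r) = log 4 + L ≤ 2L` turns `O(1/L)` into `O(1/log (1/r))`.
-/

open Real Set

section LogRatio

variable {ε s x k : ℝ}

lemma log_div_div_log_div_sub_one (hε : 0 < ε) (hx : 0 < x) (hεs : ε < s) :
    log (x / ε) / log (s / ε) - 1 = log (x / s) / log (s / ε) := by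
  have hs : 0 < s := hε.trans hεs
  have hpos : 0 < log (s / ε) := log_pos ((one_lt_div hε).2 hεs)
  rw [show x / ε = x / s * (s / ε) by field_simp, log_mul (by positivity) (by positivity)]
  field_simp
  ring

lemma one_sub_log_div_div_log_div (hε : 0 < ε) (hx : 0 < x) (hεs : ε < s) :
    1 - log (x / ε) / log (s / ε) = log (s / x) / log (s / ε) := by
  rw [← neg_sub, log_div_div_log_div_sub_one hε hx hεs, ← neg_div, ← log_inv, inv_div]

lemma log_div_log_div_le {y : ℝ} (hε : 0 < ε) (hε1 : ε < 1) (hs : 1 ≤ s) (hy : 0 < y)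
    (hk : 1 ≤ k) (hyk : y ≤ k) : log y / log (s / ε) ≤ (k - 1) / log (1 / ε) := by
  have hL : 0 < log (1 / ε) := log_pos ((one_lt_div hε).2 hε1)
  have hLs : log (1 / ε) ≤ log (s / ε) := log_le_log (by positivity) (by gcongr)
  calc log y / log (s / ε) ≤ (k - 1) / log (s / ε) := by
        gcongr
        · exact (hL.trans_le hLs).le
        · exact (log_le_sub_one_of_pos hy).trans (by linarith)
    _ ≤ (k - 1) / log (1 / ε) := by gcongr

lemma log_div_div_log_div_sub_one_mem_Ioc (hε : 0 < ε) (hε1 : ε < 1) (hs : 1 ≤ s)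
    (hsx : s < x) (hxk : x ≤ k * s) :
    log (x / ε) / log (s / ε) - 1 ∈ Ioc 0 ((k - 1) / log (1 / ε)) := by
  have hεs : ε < s := hε1.trans_le hs
  have hs0 : 0 < s := by linarith
  rw [log_div_div_log_div_sub_one hε (hs0.trans hsx) hεs]
  refine ⟨div_pos (log_pos ((one_lt_div hs0).2 hsx)) (log_pos ((one_lt_div hε).2 hεs)), ?_⟩
  refine log_div_log_div_le hε hε1 hs (div_pos (hs0.trans hsx) hs0) ?_ ((div_le_iff₀ hs0).2 hxk)
  nlinarith

lemma one_sub_log_div_div_log_div_mem_Ioo (hε : 0 < ε) (hεx : ε < x) (hxs : x < s) :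
    1 - log (x / ε) / log (s / ε) ∈ Ioo 0 1 := by
  have hx : 0 < x := hε.trans hεx
  have hεs : ε < s := hεx.trans hxs
  have hpos : 0 < log (s / ε) := log_pos ((one_lt_div hε).2 hεs)
  rw [one_sub_log_div_div_log_div hε hx hεs]
  refine ⟨div_pos (log_pos ((one_lt_div hx).2 hxs)) hpos, (div_lt_one hpos).2 ?_⟩
  exact log_lt_log (div_pos (hx.trans hxs) hx) (div_lt_div_of_pos_left (hx.trans hxs) hε hεx)

lemma one_sub_log_div_div_log_div_le (hε : 0 < ε) (hε1 : ε < 1) (hs : 1 ≤ s) (hx : 0 < x)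
    (hxs : x ≤ s) (hsk : s ≤ k * x) :
    1 - log (x / ε) / log (s / ε) ≤ (k - 1) / log (1 / ε) := by
  rw [one_sub_log_div_div_log_div hε hx (hε1.trans_le hs)]
  refine log_div_log_div_le hε hε1 hs (by positivity) ?_ ((div_le_iff₀ hx).2 hsk)
  nlinarith

end LogRatio

lemma mul_sub_one_le {x y α β L : ℝ} (hL : 1 ≤ L) (hx : 1 ≤ x) (hy : 1 ≤ y)
    (hxα : x - 1 ≤ α / L) (hyβ : y - 1 ≤ β / L) : x * y - 1 ≤ (α + β + α * β) / L := by
  have hL0 : 0 < L := by linarith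
  have hα : 0 ≤ α := by nlinarith [(le_div_iff₀ hL0).1 hxα]
  have hβ : 0 ≤ β := by nlinarith [(le_div_iff₀ hL0).1 hyβ]
  have hprod : (x - 1) * (y - 1) ≤ α * β / L := by
    calc (x - 1) * (y - 1) ≤ α / L * (β / L) := mul_le_mul hxα hyβ (by linarith) (by positivity)
      _ = α * β / L / L := by ring
      _ ≤ α * β / L := div_le_self (by positivity) hL
  rw [add_div, add_div]
  nlinarith

lemma one_sub_mul_le {x y : ℝ} (hx : x ≤ 1) (hy : y ≤ 1) : 1 - x * y ≤ (1 - x) + (1 - y) := by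
  nlinarith [mul_nonneg (sub_nonneg.2 hx) (sub_nonneg.2 hy)]

lemma one_lt_log_one_div {ε : ℝ} (hε : 0 < ε) (hε4 : ε ≤ 1 / 4) : 1 < log (1 / ε) := by
  have h4 : 1 < log 4 := (lt_log_iff_exp_lt (by norm_num)).2 (exp_one_lt_three.trans (by norm_num))
  exact h4.trans_le (log_le_log (by norm_num) ((le_div_iff₀ hε).2 (by linarith)))

lemma one_div_log_one_div_le {ε : ℝ} (hε : 0 < ε) (hε4 : ε ≤ 1 / 4) :
    1 / log (1 / ε) ≤ 2 / log (1 / (ε / 4)) := by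
  have hL := one_lt_log_one_div hε hε4
  have h4 : log 4 ≤ log (1 / ε) := log_le_log (by norm_num) ((le_div_iff₀ hε).2 (by linarith))
  have hr : log (1 / (ε / 4)) = log 4 + log (1 / ε) := by
    rw [show 1 / (ε / 4) = 4 * (1 / ε) by field_simp, log_mul (by norm_num) (by positivity)]
  have h4pos : 0 < log 4 := log_pos (by norm_num)
  rw [hr, div_le_div_iff₀ (by linarith) (by linarith)]
  linarith

/-- The exponents `a = a₁a₂` and `b = b₁b₂` of the paper, with
`a₁ = ln((16−3ε²)/(8ε))/ln(4/(3ε))`, `b₁ = ln((16+3ε²)/(16ε))/ln(4/(3ε))`,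
`a₂ = ln((4−ε²)/(3ε))/ln(1/ε)`, `b₂ = ln((4+ε²)/(5ε))/ln(1/ε)`, `r = ε/4`, satisfy
`a ∈ (1,2)`, `b ∈ (0,1)` and `a − 1 = O(1/ln(1/r))`, `1 − b = O(1/ln(1/r))` as `r → 0⁺`. -/
theorem exponent_asymptotics :
    ∃ C > (0:ℝ), ∃ ε₀ ∈ Set.Ioo (0:ℝ) 1, ∀ ε ∈ Set.Ioo (0:ℝ) ε₀,
      (Real.log ((16 - 3 * ε ^ 2) / (8 * ε)) / Real.log (4 / (3 * ε))) *
          (Real.log ((4 - ε ^ 2) / (3 * ε)) / Real.log (1 / ε)) ∈ Set.Ioo (1:ℝ) 2 ∧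
      (Real.log ((16 + 3 * ε ^ 2) / (16 * ε)) / Real.log (4 / (3 * ε))) *
          (Real.log ((4 + ε ^ 2) / (5 * ε)) / Real.log (1 / ε)) ∈ Set.Ioo (0:ℝ) 1 ∧
      (Real.log ((16 - 3 * ε ^ 2) / (8 * ε)) / Real.log (4 / (3 * ε))) *
          (Real.log ((4 - ε ^ 2) / (3 * ε)) / Real.log (1 / ε)) - 1
        ≤ C / Real.log (1 / (ε / 4)) ∧
      1 - (Real.log ((16 + 3 * ε ^ 2) / (16 * ε)) / Real.log (4 / (3 * ε))) *
          (Real.log ((4 + ε ^ 2) / (5 * ε)) / Real.log (1 / ε))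
        ≤ C / Real.log (1 / (ε / 4)) := by
  refine ⟨2, two_pos, 1 / 4, by norm_num, ?_⟩
  rintro ε ⟨hε, hε4⟩
  have hε1 : ε < 1 := by linarith
  have hε2 : ε ^ 2 < 1 := by nlinarith
  have hL := one_lt_log_one_div hε hε4.le
  have hr := one_div_log_one_div_le hε hε4.le
  simp only [← div_div]
  obtain ⟨ha₁, ha₁'⟩ := log_div_div_log_div_sub_one_mem_Ioc (s := 4 / 3)
    (x := (16 - 3 * ε ^ 2) / 8) (k := 3 / 2) hε hε1 (by norm_num) (by linarith) (by nlinarith)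
  obtain ⟨ha₂, ha₂'⟩ := log_div_div_log_div_sub_one_mem_Ioc (s := 1)
    (x := (4 - ε ^ 2) / 3) (k := 4 / 3) hε hε1 le_rfl (by linarith) (by nlinarith)
  have hb₁ := one_sub_log_div_div_log_div_mem_Ioo (s := 4 / 3)
    (x := (16 + 3 * ε ^ 2) / 16) hε (by nlinarith) (by nlinarith)
  have hb₂ := one_sub_log_div_div_log_div_mem_Ioo (s := 1)
    (x := (4 + ε ^ 2) / 5) hε (by nlinarith) (by nlinarith)
  have hb₁' := one_sub_log_div_div_log_div_le (s := 4 / 3) (x := (16 + 3 * ε ^ 2) / 16)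
    (k := 4 / 3) hε hε1 (by norm_num) (by positivity) (by nlinarith) (by nlinarith)
  have hb₂' := one_sub_log_div_div_log_div_le (s := 1) (x := (4 + ε ^ 2) / 5)
    (k := 5 / 4) hε hε1 le_rfl (by positivity) (by nlinarith) (by nlinarith)
  set L := log (1 / ε)
  set a₁ := log ((16 - 3 * ε ^ 2) / 8 / ε) / log (4 / 3 / ε)
  set a₂ := log ((4 - ε ^ 2) / 3 / ε) / log (1 / ε)
  set b₁ := log ((16 + 3 * ε ^ 2) / 16 / ε) / log (4 / 3 / ε)
  set b₂ := log ((4 + ε ^ 2) / 5 / ε) / log (1 / ε)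
  have ha : a₁ * a₂ - 1 ≤ 1 / L :=
    calc a₁ * a₂ - 1 ≤ ((3 / 2 - 1) + (4 / 3 - 1) + (3 / 2 - 1) * (4 / 3 - 1)) / L :=
          mul_sub_one_le hL.le (by linarith) (by linarith) (by linarith) (by linarith)
      _ = 1 / L := by norm_num
  have hb : 1 - b₁ * b₂ ≤ 1 / L :=
    calc 1 - b₁ * b₂ ≤ (1 - b₁) + (1 - b₂) :=
          one_sub_mul_le (by linarith [hb₁.1]) (by linarith [hb₂.1])
      _ ≤ (4 / 3 - 1) / L + (5 / 4 - 1) / L := add_le_add hb₁' hb₂'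
      _ ≤ 1 / L := by rw [← add_div]; gcongr; norm_num
  have hL' : 1 / L < 1 := (div_lt_one (by linarith)).2 hL
  refine ⟨⟨one_lt_mul (by linarith) (by linarith), by linarith⟩,
    ⟨mul_pos (by linarith [hb₁.2]) (by linarith [hb₂.2]),
      mul_lt_one_of_nonneg_of_lt_one_left (by linarith [hb₁.2]) (by linarith [hb₁.1])
        (by linarith [hb₂.1])⟩, ha.trans hr, hb.trans hr⟩
end

section
/- Let g ∈ H^∞(𝔻ⁿ, X) for a complex Banach space X. Then the Gelfand-type extension ĝ of g to the maximal ideal space 𝔐(H^∞(𝔻ⁿ)) is weak-* continuous with values in the bidual X**, and for every open set W̃ ⊂ cl(𝔻ⁿ) with W = W̃ ∩ 𝔻ⁿ one has sup_{x∈W̃} ‖ĝ(x)‖_{X**} = ‖g‖_{H^∞(W,X)}; moreover if the image of g lies in a norm-compact subset of X, then ĝ takes values in X and is norm-continuous. -/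
open Metric BoundedContinuousFunction

set_option maxHeartbeats 2000000
set_option synthInstance.maxHeartbeats 1000000

noncomputable section

/-- The open unit polydisk in `ℂⁿ`. -/
def polydisk (n : ℕ) : Set (Fin n → ℂ) := {z | ∀ i, ‖z i‖ < 1}

/-- Extension by zero of a function on the polydisk to all of `ℂⁿ`. -/
def extFun {n : ℕ} (f : ↥(polydisk n) → ℂ) : (Fin n → ℂ) → ℂ :=
  fun z => @dite _ (z ∈ polydisk n) (Classical.propDecidable _) (fun h => f ⟨z, h⟩) fun _ => 0

theorem extFun_eq {n : ℕ} (f : ↥(polydisk n) → ℂ) {z : Fin n → ℂ} (hz : z ∈ polydisk n) :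
    extFun f z = f ⟨z, hz⟩ := dif_pos hz

/-- The algebra `H^∞(𝔻ⁿ)` of bounded holomorphic functions on the polydisk, realized as
the subalgebra of bounded continuous functions on the polydisk that are holomorphic. -/
def Hinf (n : ℕ) : Subalgebra ℂ (↥(polydisk n) →ᵇ ℂ) where
  carrier := {f | DifferentiableOn ℂ (extFun f) (polydisk n)}
  mul_mem' := by
    intro f g hf hg
    exact (hf.mul hg).congr fun z hz => by
      rw [extFun_eq _ hz, Pi.mul_apply, extFun_eq _ hz, extFun_eq _ hz]; rfl
  add_mem' := by
    intro f g hf hg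
    exact (hf.add hg).congr fun z hz => by
      rw [extFun_eq _ hz, Pi.add_apply, extFun_eq _ hz, extFun_eq _ hz]; rfl
  algebraMap_mem' := by
    intro c
    exact (differentiableOn_const c).congr fun z hz => by rw [extFun_eq _ hz]; rfl

/-- The evaluation functional of `H^∞(𝔻ⁿ)` at a point of the polydisk. -/
def evalChar {n : ℕ} (z : ↥(polydisk n)) : WeakDual ℂ ↥(Hinf n) :=
  { toFun := fun f => (f : ↥(polydisk n) →ᵇ ℂ) z
    map_add' := by intro f g; rfl
    map_smul' := by intro c f; rfl
    cont := (continuous_eval_const (x := z)).comp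
      continuous_subtype_val }

theorem evalChar_prop {n : ℕ} (z : ↥(polydisk n)) :
    evalChar z ≠ 0 ∧ ∀ f g : ↥(Hinf n), evalChar z (f * g) = evalChar z f * evalChar z g := by
  constructor
  · intro h0
    have h1 : evalChar z (1 : ↥(Hinf n)) = 0 := by rw [h0]; rfl
    have h2 : evalChar z (1 : ↥(Hinf n)) = 1 := rfl
    rw [h2] at h1
    exact one_ne_zero h1
  · intro f g; rfl

/-- The evaluation character, as a point of the maximal ideal space `𝔐(H^∞(𝔻ⁿ))`. -/
def evalCharacter {n : ℕ} (z : ↥(polydisk n)) : WeakDual.characterSpace ℂ ↥(Hinf n) :=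
  ⟨evalChar z, evalChar_prop z⟩

/-- `cl(𝔻ⁿ)`: the closure of the polydisk (as evaluation characters) in the maximal
ideal space of `H^∞(𝔻ⁿ)`. -/
def clPolydisk (n : ℕ) : Set (WeakDual.characterSpace ℂ ↥(Hinf n)) :=
  closure (Set.range (evalCharacter (n := n)))

/-- The point of `cl(𝔻ⁿ)` corresponding to a point of the polydisk. -/
def clPoint {n : ℕ} (z : ↥(polydisk n)) : ↥(clPolydisk n) :=
  ⟨evalCharacter z, subset_closure ⟨z, rfl⟩⟩

/-!
For `φ ∈ X*` the scalar function `φ ∘ g` lies in `H^∞(𝔻ⁿ)`, and `T : φ ↦ φ ∘ g` is a bounded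
operator `X* → H^∞(𝔻ⁿ)`. The extension is its transpose read at characters, `ĝ(x) = x ∘ T ∈ X**`:
each `φ(ĝ(x)) = x(φ ∘ g)` is weak-* continuous in `x`, and on the polydisk `ĝ` is the canonical
image of `g`, an isometry. Dual balls are weak-* closed, so a bound for `‖g‖` on `W` passes to `ĝ`
on the closure of `W`; an open `W̃` lies in the closure of `W̃ ∩ 𝔻ⁿ` because `𝔻ⁿ` is dense in
`cl(𝔻ⁿ)`. If `g` takes values in a compact `K`, then `ĝ` takes values in the weak-* compact image of
`K`, on which the weak-* topology coincides with the norm topology of `K`.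
-/

open NormedSpace Function Set Topology

theorem zero_mem_polydisk (n : ℕ) : (0 : Fin n → ℂ) ∈ polydisk n := by
  simp [polydisk]

theorem denseRange_clPoint (n : ℕ) : DenseRange (clPoint (n := n)) := by
  rw [DenseRange, dense_iff_closure_eq, eq_univ_iff_forall]
  intro x
  rw [closure_subtype, ← range_comp]
  exact x.2

theorem Real.le_biSup {α : Type*} {u : α → ℝ} (hu : BddAbove (range u)) {p : α → Prop}
    {a : α} (ha : p a) : u a ≤ ⨆ b, ⨆ _ : p b, u b :=
  le_ciSup₂ (f := fun b (_ : p b) => u b)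
    (hu.mono (iUnion_subset fun b => range_subset_iff.2 fun _ => mem_range_self b)) a ha

theorem Real.biSup_eq_biSup_preimage {ι κ : Type*} {f : κ → ℝ} (hf : BddAbove (range f))
    (hf₀ : ∀ x, 0 ≤ f x) (e : ι → κ) {s : Set κ}
    (h : ∀ x ∈ s, ∀ C, (∀ i ∈ e ⁻¹' s, f (e i) ≤ C) → f x ≤ C) :
    ⨆ x ∈ s, f x = ⨆ i ∈ e ⁻¹' s, f (e i) := by
  have lhs₀ : 0 ≤ ⨆ x ∈ s, f x := Real.iSup_nonneg fun x => Real.iSup_nonneg fun _ => hf₀ x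
  have rhs₀ : 0 ≤ ⨆ i ∈ e ⁻¹' s, f (e i) :=
    Real.iSup_nonneg fun i => Real.iSup_nonneg fun _ => hf₀ (e i)
  apply le_antisymm
  · refine Real.iSup_le (fun x => Real.iSup_le (fun hx => h x hx _ fun i hi => ?_) rhs₀) rhs₀
    exact Real.le_biSup (hf.mono (range_comp_subset_range e f)) hi
  · exact Real.iSup_le (fun i => Real.iSup_le (fun hi => Real.le_biSup hf hi) lhs₀) lhs₀

theorem exists_continuous_lift_of_range_subset_image {α β γ : Type*} [TopologicalSpace α]
    [TopologicalSpace β] [TopologicalSpace γ] [T2Space γ] {j : α → γ} (hj : Continuous j)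
    (hj_inj : Injective j) {K : Set α} (hK : IsCompact K) {F : β → γ} (hF : Continuous F)
    (hFK : range F ⊆ j '' K) : ∃ f : β → α, Continuous f ∧ ∀ y, F y = j (f y) := by
  choose f hfK hjf using fun y => hFK (mem_range_self y)
  have : CompactSpace K := isCompact_iff_compactSpace.mp hK
  have hjK : IsClosedEmbedding (K.domRestrict j) :=
    (hj.comp continuous_subtype_val).isClosedEmbedding (hj_inj.comp Subtype.val_injective)
  have hfK_cont : Continuous fun y => (⟨f y, hfK y⟩ : K) := by
    rw [hjK.isEmbedding.continuous_iff]
    exact hF.congr fun y => (hjf y).symm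
  exact ⟨f, continuous_subtype_val.comp hfK_cont, fun y => (hjf y).symm⟩

section Extension

variable {n : ℕ} {X : Type} [NormedAddCommGroup X] [NormedSpace ℂ X]
  (g : (Fin n → ℂ) → X) (hg : DifferentiableOn ℂ g (polydisk n))
  {M : ℝ} (hM : ∀ z ∈ polydisk n, ‖g z‖ ≤ M)

def Hinf.ofDualComp (φ : StrongDual ℂ X) : Hinf n :=
  ⟨.ofNormedAddCommGroup (fun z : polydisk n => φ (g z))
      (φ.continuous.comp hg.continuousOn.domRestrict) (‖φ‖ * M)
      fun z => φ.le_opNorm_of_le (hM z z.2),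
    (φ.differentiable.comp_differentiableOn hg).congr fun _ hz => extFun_eq _ hz⟩

theorem Hinf.norm_ofDualComp_le (φ : StrongDual ℂ X) : ‖ofDualComp g hg hM φ‖ ≤ M * ‖φ‖ := by
  have hM₀ : 0 ≤ M := (norm_nonneg _).trans (hM 0 (zero_mem_polydisk n))
  rw [mul_comm]
  exact (BoundedContinuousFunction.norm_le (by positivity)).2 fun z =>
    φ.le_opNorm_of_le (hM z z.2)

def Hinf.dualComp : StrongDual ℂ X →L[ℂ] Hinf n :=
  LinearMap.mkContinuous
    { toFun := ofDualComp g hg hM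
      map_add' := fun _ _ => rfl
      map_smul' := fun _ _ => rfl }
    M (norm_ofDualComp_le g hg hM)

def gelfandExt (x : clPolydisk n) : WeakDual ℂ (StrongDual ℂ X) :=
  StrongDual.toWeakDual ((WeakDual.toStrongDual x.1.1).comp (Hinf.dualComp g hg hM))

theorem gelfandExt_clPoint (z : polydisk n) :
    gelfandExt g hg hM (clPoint z) = StrongDual.toWeakDual (inclusionInDoubleDual ℂ X (g z)) :=
  rfl

theorem continuous_gelfandExt : Continuous (gelfandExt g hg hM) :=
  WeakDual.continuous_of_continuous_eval fun φ =>
    (WeakDual.eval_continuous (Hinf.ofDualComp g hg hM φ)).comp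
      (continuous_subtype_val.comp continuous_subtype_val)

theorem norm_gelfandExt_clPoint (z : polydisk n) :
    ‖WeakDual.toStrongDual (gelfandExt g hg hM (clPoint z))‖ = ‖g z‖ := by
  rw [gelfandExt_clPoint]
  exact (inclusionInDoubleDualLi ℂ).norm_map (g z)

theorem norm_gelfandExt_le_of_mem_closure {W : Set (polydisk n)} {C : ℝ}
    (hC : ∀ z ∈ W, ‖g z‖ ≤ C) {x : clPolydisk n} (hx : x ∈ closure (clPoint '' W)) :
    ‖WeakDual.toStrongDual (gelfandExt g hg hM x)‖ ≤ C := by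
  set dualBall := gelfandExt g hg hM ⁻¹' (WeakDual.toStrongDual ⁻¹' closedBall 0 C)
  have hclosed : IsClosed dualBall :=
    (WeakDual.isClosed_closedBall 0 C).preimage (continuous_gelfandExt g hg hM)
  have hW : clPoint '' W ⊆ dualBall := by
    rintro _ ⟨z, hz, rfl⟩
    exact (dist_zero_right (WeakDual.toStrongDual (gelfandExt g hg hM (clPoint z)))).trans_le
      ((norm_gelfandExt_clPoint g hg hM z).trans_le (hC z hz))
  exact (dist_zero_right (WeakDual.toStrongDual (gelfandExt g hg hM x))).symm.trans_le
    (hclosed.closure_subset_iff.2 hW hx)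

theorem norm_gelfandExt_le (x : clPolydisk n) :
    ‖WeakDual.toStrongDual (gelfandExt g hg hM x)‖ ≤ M :=
  norm_gelfandExt_le_of_mem_closure g hg hM (W := univ) (fun z _ => hM z z.2) <| by
    rw [image_univ, (denseRange_clPoint n).closure_range]
    exact mem_univ x

theorem iSup_norm_gelfandExt {Wt : Set (clPolydisk n)} (hWt : IsOpen Wt) :
    ⨆ x ∈ Wt, ‖WeakDual.toStrongDual (gelfandExt g hg hM x)‖ = ⨆ z ∈ clPoint ⁻¹' Wt, ‖g z‖ := by
  simp_rw [← norm_gelfandExt_clPoint g hg hM]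
  refine Real.biSup_eq_biSup_preimage ⟨M, forall_mem_range.2 (norm_gelfandExt_le g hg hM)⟩
    (fun _ => ContinuousLinearMap.opNorm_nonneg _) clPoint fun x hx C hC => ?_
  refine norm_gelfandExt_le_of_mem_closure g hg hM (fun z hz => ?_)
    ((denseRange_clPoint n).subset_closure_image_preimage_of_isOpen hWt hx)
  rw [← norm_gelfandExt_clPoint g hg hM]
  exact hC z hz

theorem exists_continuous_gelfandExt_eq_of_isCompact {K : Set X} (hK : IsCompact K)
    (hgK : ∀ z ∈ polydisk n, g z ∈ K) :
    ∃ g₀ : clPolydisk n → X, Continuous g₀ ∧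
      ∀ x, gelfandExt g hg hM x = StrongDual.toWeakDual (inclusionInDoubleDual ℂ X (g₀ x)) := by
  set j : X → WeakDual ℂ (StrongDual ℂ X) :=
    fun v => StrongDual.toWeakDual (inclusionInDoubleDual ℂ X v)
  have hj : Continuous j := WeakDual.continuous_of_continuous_eval fun φ => φ.continuous
  have hj_inj : Injective j := (inclusionInDoubleDualLi ℂ (E := X)).injective
  have hrange : range (gelfandExt g hg hM) ⊆ j '' K := by
    refine ((continuous_gelfandExt g hg hM).range_subset_closure_image_dense
      (denseRange_clPoint n)).trans ((hK.image hj).isClosed.closure_subset_iff.2 ?_)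
    rintro _ ⟨_, ⟨z, rfl⟩, rfl⟩
    exact ⟨g z, hgK z z.2, (gelfandExt_clPoint g hg hM z).symm⟩
  exact exists_continuous_lift_of_range_subset_image hj hj_inj hK
    (continuous_gelfandExt g hg hM) hrange

end Extension

theorem gelfand_extension_polydisk_general {n : ℕ} {X : Type} [NormedAddCommGroup X]
    [NormedSpace ℂ X]
    (g : (Fin n → ℂ) → X) (hg : DifferentiableOn ℂ g (polydisk n))
    (M : ℝ) (hM : ∀ z ∈ polydisk n, ‖g z‖ ≤ M) :
    ∃ gh : ↥(clPolydisk n) → WeakDual ℂ (StrongDual ℂ X),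
      Continuous gh ∧
      (∀ (z : ↥(polydisk n)) (φ : StrongDual ℂ X),
        gh (clPoint z) φ = φ (g (z : Fin n → ℂ))) ∧
      (∀ Wt : Set ↥(clPolydisk n), IsOpen Wt →
        (⨆ x ∈ Wt, ‖WeakDual.toStrongDual (gh x)‖)
          = ⨆ z ∈ {z : ↥(polydisk n) | clPoint z ∈ Wt}, ‖g (z : Fin n → ℂ)‖) ∧
      ((∃ Kc : Set X, IsCompact Kc ∧ ∀ z ∈ polydisk n, g z ∈ Kc) →
        ∃ g₀ : ↥(clPolydisk n) → X, Continuous g₀ ∧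
          ∀ (x : ↥(clPolydisk n)) (φ : StrongDual ℂ X),
            gh x φ = φ (g₀ x)) := by
  refine ⟨gelfandExt g hg hM, continuous_gelfandExt g hg hM,
    fun z φ => by rw [gelfandExt_clPoint]; rfl, fun Wt hWt => iSup_norm_gelfandExt g hg hM hWt, ?_⟩
  rintro ⟨K, hK, hgK⟩
  obtain ⟨g₀, hg₀, hgg₀⟩ := exists_continuous_gelfandExt_eq_of_isCompact g hg hM hK hgK
  exact ⟨g₀, hg₀, fun x φ => by rw [hgg₀]; rfl⟩

/-- For a bounded holomorphic `g : 𝔻ⁿ → X` the Gelfand-type extension `gh` to the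
maximal ideal space is weak-* continuous with values in the bidual `X**`, satisfies
`φ(gh(ev_z)) = φ(g(z))`, realizes the sup-norm equality
`sup_{x ∈ Wt} ‖gh(x)‖ = ‖g‖_{H^∞(W,X)}` over open `Wt ⊆ cl(𝔻ⁿ)` with
`W = Wt ∩ 𝔻ⁿ`, and takes values in `X` (norm-continuously) when the image of `g` is
contained in a norm-compact set. -/
theorem gelfand_extension_polydisk {n : ℕ} {X : Type} [NormedAddCommGroup X]
    [NormedSpace ℂ X] [CompleteSpace X]
    (g : (Fin n → ℂ) → X) (hg : DifferentiableOn ℂ g (polydisk n))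
    (M : ℝ) (hM : ∀ z ∈ polydisk n, ‖g z‖ ≤ M) :
    ∃ gh : ↥(clPolydisk n) → WeakDual ℂ (StrongDual ℂ X),
      Continuous gh ∧
      (∀ (z : ↥(polydisk n)) (φ : StrongDual ℂ X),
        gh (clPoint z) φ = φ (g (z : Fin n → ℂ))) ∧
      (∀ Wt : Set ↥(clPolydisk n), IsOpen Wt →
        (⨆ x ∈ Wt, ‖WeakDual.toStrongDual (gh x)‖)
          = ⨆ z ∈ {z : ↥(polydisk n) | clPoint z ∈ Wt}, ‖g (z : Fin n → ℂ)‖) ∧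
      ((∃ Kc : Set X, IsCompact Kc ∧ ∀ z ∈ polydisk n, g z ∈ Kc) →
        ∃ g₀ : ↥(clPolydisk n) → X, Continuous g₀ ∧
          ∀ (x : ↥(clPolydisk n)) (φ : StrongDual ℂ X),
            gh x φ = φ (g₀ x)) :=
  gelfand_extension_polydisk_general g hg M hM

end
end
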